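/- The Aharonov–Bohm operator commutes with the antilinear operator K: for every C² function u : ℝ²∖{0} → ℂ and every point p ∈ ℝ²∖{0}, one has K(−Δ_A u)(p) = (−Δ_A (Ku))(p). (In particular −Δ_A preserves K-real functions.) -/

import Mathlib

noncomputable section

/-- Partial derivative in the `x`-direction of a function on `ℝ²`. -/
def pdx (u : ℝ × ℝ → ℂ) (p : ℝ × ℝ) : ℂ := fderiv ℝ u p (1, 0)

/-- Partial derivative in the `y`-direction of a function on `ℝ²`. -/
def pdy (u : ℝ × ℝ → ℂ) (p : ℝ × ℝ) : ℂ := fderiv ℝ u p (0, 1)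

/-- First component `A₁ = −y/(2r²)` of the Aharonov–Bohm potential with flux `1/2`. -/
def A1 (p : ℝ × ℝ) : ℝ := -p.2 / (2 * (p.1 ^ 2 + p.2 ^ 2))

/-- Second component `A₂ = x/(2r²)` of the Aharonov–Bohm potential with flux `1/2`. -/
def A2 (p : ℝ × ℝ) : ℝ := p.1 / (2 * (p.1 ^ 2 + p.2 ^ 2))

/-- The magnetic derivative `(−i∂ₓ − A₁)u`. -/
def P1 (u : ℝ × ℝ → ℂ) : ℝ × ℝ → ℂ :=
  fun p => -Complex.I * pdx u p - (A1 p : ℂ) * u p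

/-- The magnetic derivative `(−i∂_y − A₂)u`. -/
def P2 (u : ℝ × ℝ → ℂ) : ℝ × ℝ → ℂ :=
  fun p => -Complex.I * pdy u p - (A2 p : ℂ) * u p

/-- The Aharonov–Bohm operator `−Δ_A u = (−i∂ₓ − A₁)²u + (−i∂_y − A₂)²u`. -/
def ABLaplacian (u : ℝ × ℝ → ℂ) : ℝ × ℝ → ℂ :=
  fun p => P1 (P1 u) p + P2 (P2 u) p

/-- The antilinear operator `K`: `(Ku)(x,y) = ((x+iy)/|x+iy|) · conj(u(x,y))`,
i.e. `Ku = e^{iθ} ū` in polar coordinates. -/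
def Kop (u : ℝ × ℝ → ℂ) : ℝ × ℝ → ℂ :=
  fun p => ((p.1 + p.2 * Complex.I) / ‖(p.1 + p.2 * Complex.I : ℂ)‖)
    * (starRingEnd ℂ) (u p)

/-! Write `Ku = φ ū` with the phase `φ = e^{iθ}`. Since `A = ∇θ / 2`, the phase satisfies
`∂ⱼφ = 2i Aⱼ φ`, and the Leibniz rule then gives `(−i∂ⱼ − Aⱼ)(φ ū) = −φ · conj((−i∂ⱼ − Aⱼ)u)`:
each magnetic derivative anticommutes with `K`, so its square commutes with `K`. -/

open Complex Filter Topology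
open scoped ComplexConjugate

namespace AharonovBohm

section MagneticDeriv

variable {E : Type*} [NormedAddCommGroup E] [NormedSpace ℝ E] {a : E → ℝ} {v p : E}

def magneticDeriv (a : E → ℝ) (v : E) (u : E → ℂ) (p : E) : ℂ :=
  -I * fderiv ℝ u p v - a p * u p

theorem magneticDeriv_congr {u w : E → ℂ} (h : u =ᶠ[𝓝 p] w) :
    magneticDeriv a v u p = magneticDeriv a v w p := by
  simp only [magneticDeriv, h.fderiv_eq, h.self_of_nhds]

theorem magneticDeriv_neg (u : E → ℂ) : magneticDeriv a v (-u) p = -magneticDeriv a v u p := by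
  simp only [magneticDeriv, fderiv_neg, Pi.neg_apply, neg_apply]
  ring

theorem magneticDeriv_mul_conj {φ u : E → ℂ} (hφ : DifferentiableAt ℝ φ p)
    (hφv : fderiv ℝ φ p v = 2 * a p * I * φ p) (hu : DifferentiableAt ℝ u p) :
    magneticDeriv a v (fun q => φ q * conj (u q)) p = -(φ p * conj (magneticDeriv a v u p)) := by
  have hD : fderiv ℝ (fun q => φ q * conj (u q)) p v =
      φ p * conj (fderiv ℝ u p v) + conj (u p) * fderiv ℝ φ p v := by
    change fderiv ℝ (fun q => φ q * star (u q)) p v = _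
    rw [fderiv_fun_mul hφ hu.star, fderiv_star]
    simp
  simp only [magneticDeriv, hD, hφv, map_sub, map_mul, map_neg, conj_I, conj_ofReal]
  linear_combination (-2 * (a p : ℂ) * φ p * conj (u p)) * I_sq

theorem magneticDeriv_magneticDeriv_mul_conj {φ u : E → ℂ}
    (hφ : ∀ᶠ q in 𝓝 p, DifferentiableAt ℝ φ q ∧ fderiv ℝ φ q v = 2 * a q * I * φ q)
    (hu : ∀ᶠ q in 𝓝 p, DifferentiableAt ℝ u q)
    (hu' : DifferentiableAt ℝ (magneticDeriv a v u) p) :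
    magneticDeriv a v (magneticDeriv a v fun q => φ q * conj (u q)) p
      = φ p * conj (magneticDeriv a v (magneticDeriv a v u) p) := by
  have hanti : magneticDeriv a v (fun q => φ q * conj (u q))
      =ᶠ[𝓝 p] -fun q => φ q * conj (magneticDeriv a v u q) := by
    filter_upwards [hφ, hu] with q ⟨hφq, hφqv⟩ huq
    exact magneticDeriv_mul_conj hφq hφqv huq
  rw [magneticDeriv_congr hanti, magneticDeriv_neg,
    magneticDeriv_mul_conj hφ.self_of_nhds.1 hφ.self_of_nhds.2 hu', neg_neg]

theorem differentiableAt_magneticDeriv {u : E → ℂ} (ha : DifferentiableAt ℝ a p)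
    (hu : ContDiffAt ℝ 2 u p) : DifferentiableAt ℝ (magneticDeriv a v u) p := by
  have hDu : DifferentiableAt ℝ (fderiv ℝ u) p :=
    (hu.fderiv_right (m := 1) (by norm_num)).differentiableAt (by norm_num)
  have hu₁ : DifferentiableAt ℝ u p := hu.differentiableAt (by norm_num)
  unfold magneticDeriv
  fun_prop

end MagneticDeriv

variable {p : ℝ × ℝ}

theorem sq_add_sq_pos (hp : p ≠ 0) : 0 < p.1 ^ 2 + p.2 ^ 2 := by
  rcases p with ⟨x, y⟩
  by_cases hx : x = 0
  · have hy : y ≠ 0 := by simpa [hx] using hp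
    positivity
  · positivity

theorem differentiableAt_A1 (hp : p ≠ 0) : DifferentiableAt ℝ A1 p := by
  have := sq_add_sq_pos hp
  unfold A1
  fun_prop (disch := positivity)

theorem differentiableAt_A2 (hp : p ≠ 0) : DifferentiableAt ℝ A2 p := by
  have := sq_add_sq_pos hp
  unfold A2
  fun_prop (disch := positivity)

def phase (p : ℝ × ℝ) : ℂ := (p.1 + p.2 * I) / ‖(p.1 + p.2 * I : ℂ)‖

theorem phase_eq_smul (p : ℝ × ℝ) : phase p = (√(p.1 ^ 2 + p.2 ^ 2))⁻¹ • (p.1 + p.2 * I : ℂ) := by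
  rw [phase, norm_add_mul_I, Complex.real_smul, div_eq_inv_mul, ofReal_inv]

def dAngle (p : ℝ × ℝ) : ℝ × ℝ →L[ℝ] ℝ :=
  (p.1 / (p.1 ^ 2 + p.2 ^ 2)) • ContinuousLinearMap.snd ℝ ℝ ℝ
    - (p.2 / (p.1 ^ 2 + p.2 ^ 2)) • ContinuousLinearMap.fst ℝ ℝ ℝ

theorem hasFDerivAt_phase (hp : p ≠ 0) :
    HasFDerivAt phase ((dAngle p).smulRight (I * phase p)) p := by
  have hN := sq_add_sq_pos hp
  have hr : √(p.1 ^ 2 + p.2 ^ 2) ≠ 0 := (Real.sqrt_pos.2 hN).ne'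
  have hN' : HasFDerivAt (fun q : ℝ × ℝ => q.1 ^ 2 + q.2 ^ 2) _ p :=
    ((hasFDerivAt_fst (𝕜 := ℝ) (p := p)).pow 2).add ((hasFDerivAt_snd (𝕜 := ℝ) (p := p)).pow 2)
  have hr' : HasFDerivAt (fun q : ℝ × ℝ => (√(q.1 ^ 2 + q.2 ^ 2))⁻¹) _ p :=
    (hasDerivAt_inv hr).comp_hasFDerivAt p (hN'.sqrt hN.ne')
  have hz : HasFDerivAt (fun q : ℝ × ℝ => (q.1 + q.2 * I : ℂ)) _ p :=
    (ofRealCLM.hasFDerivAt.comp p hasFDerivAt_fst).add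
      ((ofRealCLM.hasFDerivAt.comp p hasFDerivAt_snd).mul_const I)
  rw [show phase = _ from funext phase_eq_smul]
  refine (hr'.smul hz).congr_fderiv ?_
  have hr2 : (√(p.1 ^ 2 + p.2 ^ 2) : ℂ) ^ 2 = p.1 ^ 2 + p.2 ^ 2 := by
    norm_cast
    exact Real.sq_sqrt hN.le
  -- With `r² = p₁² + p₂²`: `(v₁ + i v₂) r² − z (p₁v₁ + p₂v₂) = i (p₁v₂ − p₂v₁) z`.
  refine ContinuousLinearMap.ext fun v => ?_
  simp only [smul_add, one_div, mul_inv_rev, Nat.add_one_sub_one, pow_one, nsmul_eq_mul,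
    Nat.cast_ofNat, neg_smul, add_apply, smul_apply, ContinuousLinearMap.comp_apply,
    ContinuousLinearMap.coe_fst', ContinuousLinearMap.coe_snd', ofRealCLM_apply, real_smul,
    smul_eq_mul, ContinuousLinearMap.smulRight_apply, neg_apply, ofReal_add, ofReal_neg, ofReal_mul,
    ofReal_inv, ofReal_pow, ofReal_ofNat, dAngle, sub_apply, ofReal_sub, ofReal_div, ← hr2]
  field_simp
  linear_combination (√(p.1 ^ 2 + p.2 ^ 2) : ℂ)⁻¹ ^ 3 *
    ((v.1 + I * v.2) * hr2 + p.2 * (v.1 * p.2 - p.1 * v.2) * I_sq)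

theorem fderiv_phase_apply (hp : p ≠ 0) (v : ℝ × ℝ) :
    fderiv ℝ phase p v = dAngle p v * I * phase p := by
  rw [(hasFDerivAt_phase hp).fderiv, ContinuousLinearMap.smulRight_apply, real_smul, mul_assoc]

theorem dAngle_apply_one_zero : dAngle p (1, 0) = 2 * A1 p := by
  simp only [dAngle, A1, sub_apply, smul_apply, ContinuousLinearMap.coe_fst',
    ContinuousLinearMap.coe_snd', smul_eq_mul, mul_zero, mul_one, zero_sub]
  field_simp

theorem dAngle_apply_zero_one : dAngle p (0, 1) = 2 * A2 p := by
  simp only [dAngle, A2, sub_apply, smul_apply, ContinuousLinearMap.coe_fst',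
    ContinuousLinearMap.coe_snd', smul_eq_mul, mul_zero, mul_one, sub_zero]
  field_simp

theorem magneticDeriv_magneticDeriv_Kop {a : ℝ × ℝ → ℝ} {v : ℝ × ℝ} {u : ℝ × ℝ → ℂ}
    (hav : ∀ q, dAngle q v = 2 * a q) (ha : DifferentiableAt ℝ a p)
    (hu : ContDiffOn ℝ 2 u {q | q ≠ 0}) (hp : p ≠ 0) :
    magneticDeriv a v (magneticDeriv a v (Kop u)) p
      = Kop (magneticDeriv a v (magneticDeriv a v u)) p := by
  have hC2 : ∀ᶠ q in 𝓝 p, ContDiffAt ℝ 2 u q :=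
    (hu.contDiffAt (isOpen_ne.mem_nhds hp)).eventually (by simp)
  have hphase : ∀ᶠ q in 𝓝 p,
      DifferentiableAt ℝ phase q ∧ fderiv ℝ phase q v = 2 * a q * I * phase q := by
    filter_upwards [isOpen_ne.mem_nhds hp] with q hq
    refine ⟨(hasFDerivAt_phase hq).differentiableAt, ?_⟩
    rw [fderiv_phase_apply hq, hav, ofReal_mul, ofReal_ofNat]
  exact magneticDeriv_magneticDeriv_mul_conj hphase
    (hC2.mono fun q hq => hq.differentiableAt (by norm_num))
    (differentiableAt_magneticDeriv ha hC2.self_of_nhds)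

end AharonovBohm

open AharonovBohm

/-- The Aharonov–Bohm operator commutes with the antilinear operator `K`:
for every `C²` function `u` on `ℝ²∖{0}` and every point `p ≠ 0`,
`K(−Δ_A u)(p) = (−Δ_A(Ku))(p)`. In particular `−Δ_A` preserves K-real functions. -/
theorem ABLaplacian_comm_K (u : ℝ × ℝ → ℂ)
    (hu : ContDiffOn ℝ 2 u {p : ℝ × ℝ | p ≠ 0}) (p : ℝ × ℝ) (hp : p ≠ 0) :
    Kop (ABLaplacian u) p = ABLaplacian (Kop u) p := by
  -- `Pⱼ = magneticDeriv Aⱼ eⱼ` and `Kop u = fun q => phase q * conj (u q)` hold definitionally.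
  have h1 : P1 (P1 (Kop u)) p = Kop (P1 (P1 u)) p :=
    magneticDeriv_magneticDeriv_Kop (fun _ => dAngle_apply_one_zero) (differentiableAt_A1 hp) hu hp
  have h2 : P2 (P2 (Kop u)) p = Kop (P2 (P2 u)) p :=
    magneticDeriv_magneticDeriv_Kop (fun _ => dAngle_apply_zero_one) (differentiableAt_A2 hp) hu hp
  calc Kop (ABLaplacian u) p = Kop (P1 (P1 u)) p + Kop (P2 (P2 u)) p := by
        simp only [Kop, ABLaplacian, map_add, mul_add]
    _ = ABLaplacian (Kop u) p := by rw [← h1, ← h2, ABLaplacian]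

end
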